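/- arXiv:1305.1920 — 3 statements merged into one kernel-verified Lean document; each statement's English description precedes it below -/
import Mathlib

section
/- Let μ₁, …, μₙ be non-atomic compactly supported probability measures on ℂ with product measure μ on ℂⁿ, and let A be an ℓ × ℓ matrix of polynomials in n variables. Then the integral ∫ rank(A(t)) dμ(t) is a nonnegative integer. -/
/-!
Over the fraction field of the polynomial ring, invertible matrices bring `A` to the normal form
`diag(1ᵣ, 0)`. Clearing denominators gives polynomial matrices `V`, `U` and a nonzero polynomial
`c` with `V A U = c • diag(1ᵣ, 0)`, so `rank A(t) = r` wherever `det V · det U · c` does not vanish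
at `t`. The zero set of a nonzero polynomial is null for a product of atomless measures (Fubini and
induction on the number of variables, a nonzero polynomial in one variable having finitely many
roots), hence `rank A(t) = r` almost everywhere and the integral equals `r`.
-/

open MeasureTheory

namespace IsLocalization

theorem exists_matrix_map_eq_smul {R S : Type*} [CommRing R] (M : Submonoid R) [CommRing S]
    [Algebra R S] [IsLocalization M S] {m n : Type*} [Finite m] [Finite n] (N : Matrix m n S) :
    ∃ (b : M) (N' : Matrix m n R), N'.map (algebraMap R S) = algebraMap R S b • N := by
  obtain ⟨b, hb⟩ := exist_integer_multiples_of_finite M fun ij : m × n => N ij.1 ij.2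
  choose N' hN' using hb
  refine ⟨b, Matrix.of fun i j => N' (i, j), ?_⟩
  ext i j
  simpa [Algebra.smul_def] using hN' (i, j)

end IsLocalization

namespace Matrix

variable {R S m : Type*}

theorem fromBlocks_one_zero_submatrix_map [CommRing R] [CommRing S] [DecidableEq m] (f : R →+* S)
    {r k : ℕ} (e : m ≃ Fin r ⊕ Fin k) :
    ((fromBlocks (1 : Matrix (Fin r) (Fin r) R) 0 0 0).submatrix e e).map f =
      (fromBlocks 1 0 0 0).submatrix e e := by
  simp [← submatrix_map, fromBlocks_map]

theorem rank_fromBlocks_one_zero_submatrix [Field S] [Fintype m] {r k : ℕ}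
    (e : m ≃ Fin r ⊕ Fin k) :
    ((fromBlocks (1 : Matrix (Fin r) (Fin r) S) 0 0 0).submatrix e e).rank = r := by
  classical
  rw [rank_submatrix, ← diagonal_one, ← diagonal_zero, fromBlocks_diagonal, rank_diagonal,
    Fintype.card_subtype, Finset.card_filter, Fintype.sum_sum_type]
  simp

variable [Fintype m] [DecidableEq m]

theorem exists_mul_mul_eq_smul_fromBlocks [CommRing R] [IsDomain R] (A : Matrix m m R) :
    ∃ (r : ℕ) (V U : Matrix m m R) (c : R) (e : m ≃ Fin r ⊕ Fin (Fintype.card m - r)),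
      V.det ≠ 0 ∧ U.det ≠ 0 ∧ c ≠ 0 ∧ V * A * U = c • (fromBlocks 1 0 0 0).submatrix e e := by
  let K := FractionRing R
  have hinj : Function.Injective (algebraMap R K) := IsFractionRing.injective R K
  obtain ⟨V, U, e, hV, hU, hVAU⟩ := exists_rank_normal_form (A.map (algebraMap R K))
  obtain ⟨b, V', hV'⟩ := IsLocalization.exists_matrix_map_eq_smul (nonZeroDivisors R) V
  obtain ⟨b', U', hU'⟩ := IsLocalization.exists_matrix_map_eq_smul (nonZeroDivisors R) U
  have det_ne_zero {W : Matrix m m K} {W' : Matrix m m R} {d : nonZeroDivisors R} (hW : IsUnit W)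
      (hW' : W'.map (algebraMap R K) = algebraMap R K d • W) : W'.det ≠ 0 := by
    rw [← map_ne_zero_iff _ hinj, RingHom.map_det, RingHom.mapMatrix_apply, hW', det_smul]
    exact mul_ne_zero (pow_ne_zero _ (IsFractionRing.to_map_ne_zero_of_mem_nonZeroDivisors d.2))
      ((isUnit_iff_isUnit_det W).1 hW).ne_zero
  refine ⟨_, V', U', b * b', e, det_ne_zero hV hV', det_ne_zero hU hU',
    nonZeroDivisors.ne_zero (b * b').2, map_injective hinj ?_⟩
  dsimp only
  rw [Matrix.map_mul, Matrix.map_mul, hV', hU', smul_mul_assoc, smul_mul_assoc, mul_smul_comm,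
    smul_smul, hVAU, map_smul' _ _ _ (map_mul _), fromBlocks_one_zero_submatrix_map, map_mul]

theorem rank_map_eq_of_mul_mul_eq_smul [CommRing R] [Field S] (f : R →+* S) {A V U : Matrix m m R}
    {c : R} {r k : ℕ} {e : m ≃ Fin r ⊕ Fin k}
    (h : V * A * U = c • (fromBlocks 1 0 0 0).submatrix e e) (hf : f (V.det * U.det * c) ≠ 0) :
    (A.map f).rank = r := by
  simp only [map_mul, mul_ne_zero_iff] at hf
  obtain ⟨⟨hV, hU⟩, hc⟩ := hf
  have hmap : V.map f * A.map f * U.map f = f c • (fromBlocks 1 0 0 0).submatrix e e := by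
    rw [← Matrix.map_mul, ← Matrix.map_mul, h, map_smul' _ _ _ (map_mul f),
      fromBlocks_one_zero_submatrix_map]
  have isUnit_det {W : Matrix m m R} (hW : f W.det ≠ 0) : IsUnit (W.map f).det := by
    rw [← RingHom.mapMatrix_apply, ← RingHom.map_det]
    exact hW.isUnit
  calc (A.map f).rank = (V.map f * A.map f).rank :=
        (rank_mul_eq_right_of_isUnit_det _ _ (isUnit_det hV)).symm
    _ = (V.map f * A.map f * U.map f).rank :=
        (rank_mul_eq_left_of_isUnit_det _ _ (isUnit_det hU)).symm
    _ = r := by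
      rw [hmap, rank_smul_of_mem_nonZeroDivisors _ (mem_nonZeroDivisors_of_ne_zero hc),
        rank_fromBlocks_one_zero_submatrix]

theorem exists_rank_map_eq_of_apply_ne_zero [CommRing R] [IsDomain R] (S : Type*) [Field S]
    (A : Matrix m m R) :
    ∃ (r : ℕ) (p : R), p ≠ 0 ∧ ∀ f : R →+* S, f p ≠ 0 → (A.map f).rank = r := by
  obtain ⟨r, V, U, c, e, hV, hU, hc, h⟩ := exists_mul_mul_eq_smul_fromBlocks A
  exact ⟨r, V.det * U.det * c, by simp [hV, hU, hc], fun f hf =>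
    rank_map_eq_of_mul_mul_eq_smul f h hf⟩

end Matrix

namespace MvPolynomial

variable {K : Type*} [Field K] [MeasurableSpace K]

theorem measurable_eval [MeasurableAdd₂ K] [MeasurableMul₂ K] {σ : Type*} (p : MvPolynomial σ K) :
    Measurable fun x : σ → K => eval x p := by
  induction p using MvPolynomial.induction_on with
  | C a => simp
  | add p q hp hq => simpa [Pi.add_def] using hp.add hq
  | mul_X p i hp => simpa [Pi.mul_def] using hp.mul (measurable_pi_apply i)

theorem ae_eval_ne_zero [MeasurableSingletonClass K] [MeasurableAdd₂ K] [MeasurableMul₂ K] :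
    ∀ {n : ℕ} (μ : Fin n → Measure K) [∀ i, SigmaFinite (μ i)] [∀ i, NullSingletonClass (μ i)]
      {p : MvPolynomial (Fin n) K}, p ≠ 0 → ∀ᵐ x ∂Measure.pi μ, eval x p ≠ 0
  | 0, μ, _, _, p, hp => by
    obtain ⟨a, rfl⟩ := C_surjective (Fin 0) p
    exact .of_forall fun x => by simpa using hp
  | n + 1, μ, _, _, p, hp => by
    set q := finSuccEquiv K n p
    obtain ⟨k, hk⟩ : ∃ k, q.coeff k ≠ 0 := by
      by_contra! h
      exact hp ((finSuccEquiv K n).map_eq_zero_iff.1 (Polynomial.ext h))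
    have hslice : ∀ᵐ y ∂Measure.pi (fun j => μ (Fin.succAbove 0 j)), ∀ᵐ a ∂μ 0,
        eval (Fin.cons a y) p ≠ 0 := by
      filter_upwards [ae_eval_ne_zero (fun j => μ (Fin.succAbove 0 j)) hk] with y hy
      have hqy : q.map (eval y) ≠ 0 := fun h => hy (by simpa using congrArg (·.coeff k) h)
      filter_upwards [(Polynomial.finite_setOfPred_isRoot hqy).countable.ae_notMem (μ 0)] with a ha
      rwa [eval_eq_eval_mv_eval']
    let e := MeasurableEquiv.piFinSuccAbove (fun _ : Fin (n + 1) => K) 0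
    have hmeas : MeasurableSet {z : K × (Fin n → K) | eval (Fin.cons z.1 z.2) p ≠ 0} := by
      convert (measurable_eval p).comp e.symm.measurable (measurableSet_singleton 0).compl
      ext; simp [e, Fin.consEquiv]
    have hprod := (Measure.ae_prod_iff_ae_ae hmeas).2 ((Measure.ae_ae_comm hmeas).2 hslice)
    filter_upwards [(measurePreserving_piFinSuccAbove μ 0).quasiMeasurePreserving.ae hprod]
      with x hx
    simpa [e] using hx

end MvPolynomial

theorem stmt3_general (n ℓ : ℕ) (μ : Fin n → Measure ℂ) [∀ j, IsProbabilityMeasure (μ j)]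
    (hna : ∀ j (t : ℂ), μ j {t} = 0)
    (A : Matrix (Fin ℓ) (Fin ℓ) (MvPolynomial (Fin n) ℂ)) :
    ∃ r : ℕ, ∫ x, ((A.map (MvPolynomial.eval x)).rank : ℝ) ∂(Measure.pi μ) = (r : ℝ) := by
  have (j : Fin n) : NullSingletonClass (μ j) := ⟨hna j⟩
  obtain ⟨r, p, hp, hrank⟩ := A.exists_rank_map_eq_of_apply_ne_zero ℂ
  refine ⟨r, ?_⟩
  have hae : (fun x => ((A.map (MvPolynomial.eval x)).rank : ℝ)) =ᵐ[Measure.pi μ]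
      fun _ => (r : ℝ) := by
    filter_upwards [MvPolynomial.ae_eval_ne_zero μ hp] with x hx
    rw [hrank _ hx]
  simp [integral_congr_ae hae]

/-- In the setting of non-atomic compactly supported probability measures on `ℂ`
with product measure `μ`, and a matrix `A` of polynomials, the integral of the rank of the
evaluated matrix is a nonnegative integer. -/
theorem stmt3 (n ℓ : ℕ) (μ : Fin n → Measure ℂ) [∀ j, IsProbabilityMeasure (μ j)]
    (hcpt : ∀ j, ∃ R : ℝ, μ j {z : ℂ | R < ‖z‖} = 0)
    (hna : ∀ j (t : ℂ), μ j {t} = 0)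
    (A : Matrix (Fin ℓ) (Fin ℓ) (MvPolynomial (Fin n) ℂ)) :
    ∃ r : ℕ, ∫ x, ((A.map (MvPolynomial.eval x)).rank : ℝ) ∂(Measure.pi μ) = (r : ℝ) :=
  stmt3_general n ℓ μ hna A
end

section
/- Let A be a positive operator in a finite von Neumann algebra M with faithful normal tracial state τ, and let F_A(t) = τ(E_A(t)) be its spectral density function, where E_A(t) is the spectral projection of A onto (−∞, t]. If the Novikov–Shubin invariant α(A) is nonzero (possibly ∞ or ∞⁺), then lim_{ε→0⁺} ∫_ε^{‖A‖} (F_A(t) − F_A(0))/t dt < ∞. -/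
/-!
A positive Novikov–Shubin invariant, as well as a spectral gap at `0`, yields a bound
`F t - F 0 ≤ t ^ c` near `0⁺` for some `c > 0`. The nonnegative integrand `(F t - F 0) / t` is then
dominated by the integrable `t ^ (c - 1)` near `0`, and by monotonicity it is bounded away from `0`;
so it is integrable on `(0, a]`, and the limit is `∫ t in Ioc 0 a` by continuity of the primitive.
-/

open MeasureTheory Filter Set Topology

theorem Real.le_rpow_of_lt_log_div_log {x t c : ℝ} (ht₀ : 0 < t) (ht₁ : t < 1)
    (h : c < Real.log x / Real.log t) : x ≤ t ^ c := by
  rcases le_or_gt x 0 with hx | hx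
  · exact hx.trans (Real.rpow_nonneg ht₀.le c)
  · have hlog : Real.log x < Real.log (t ^ c) := by
      rw [Real.log_rpow ht₀]
      exact (lt_div_iff_of_neg (Real.log_neg ht₀ ht₁)).mp h
    exact ((Real.log_lt_log_iff hx (Real.rpow_pos_of_pos ht₀ c)).mp hlog).le

theorem exists_eventually_le_rpow_of_pos_liminf {G : ℝ → ℝ}
    (h : (0 : EReal) <
      liminf (fun t : ℝ => ((Real.log (G t) / Real.log t : ℝ) : EReal)) (𝓝[>] 0)) :
    ∃ c > (0 : ℝ), ∀ᶠ t in 𝓝[>] 0, G t ≤ t ^ c := by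
  obtain ⟨c, hc₀, hc⟩ := EReal.exists_between_coe_real h
  refine ⟨c, mod_cast hc₀, ?_⟩
  filter_upwards [eventually_lt_of_lt_liminf hc, Ioo_mem_nhdsGT one_pos] with t ht ht₀₁
  exact Real.le_rpow_of_lt_log_div_log ht₀₁.1 ht₀₁.2 (mod_cast ht)

namespace Monotone

variable {F : ℝ → ℝ}

theorem exists_eventually_sub_le_rpow (hF : Monotone F)
    (hα : (∃ t > (0 : ℝ), F t = F 0) ∨
      (0 : EReal) < liminf (fun t : ℝ => ((Real.log (F t - F 0) / Real.log t : ℝ) : EReal))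
        (𝓝[>] 0)) :
    ∃ c > (0 : ℝ), ∀ᶠ t in 𝓝[>] 0, F t - F 0 ≤ t ^ c := by
  rcases hα with ⟨t₀, ht₀, hFt₀⟩ | hlim
  · refine ⟨1, one_pos, ?_⟩
    filter_upwards [Ioo_mem_nhdsGT ht₀] with t ht
    have : F t ≤ F 0 := hFt₀ ▸ hF ht.2.le
    linarith [Real.rpow_pos_of_pos ht.1 1]
  · exact exists_eventually_le_rpow_of_pos_liminf hlim

theorem integrableOn_sub_div_Ioc (hF : Monotone F) {c : ℝ} (hc : 0 < c)
    (hle : ∀ᶠ t in 𝓝[>] 0, F t - F 0 ≤ t ^ c) (a : ℝ) :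
    IntegrableOn (fun t => (F t - F 0) / t) (Ioc 0 a) := by
  obtain ⟨δ, hδ, hδle⟩ := (nhdsGT_basis (0 : ℝ)).eventually_iff.mp hle
  have hmeas : AEStronglyMeasurable (fun t => (F t - F 0) / t) :=
    ((hF.measurable.sub_const _).div measurable_id).aestronglyMeasurable
  have hnear : IntegrableOn (fun t => (F t - F 0) / t) (Ioo 0 δ) := by
    refine ((intervalIntegral.integrableOn_Ioo_rpow_iff hδ).mpr (by linarith : -1 < c - 1)).mono'
      hmeas.restrict ?_
    filter_upwards [ae_restrict_mem measurableSet_Ioo] with t ht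
    rw [Real.norm_of_nonneg (div_nonneg (sub_nonneg.mpr (hF ht.1.le)) ht.1.le),
      Real.rpow_sub ht.1, Real.rpow_one]
    exact div_le_div_of_nonneg_right (hδle ht) ht.1.le
  have hfar : IntegrableOn (fun t => (F t - F 0) / t) (Icc δ a) := by
    refine Measure.integrableOn_of_bounded measure_Icc_lt_top.ne hmeas (M := (F a - F 0) / δ) ?_
    filter_upwards [ae_restrict_mem measurableSet_Icc] with t ht
    have ht₀ : 0 < t := hδ.trans_le ht.1
    rw [Real.norm_of_nonneg (div_nonneg (sub_nonneg.mpr (hF ht₀.le)) ht₀.le)]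
    exact div_le_div₀ (sub_nonneg.mpr (hF (ht₀.le.trans ht.2))) (by linarith [hF ht.2]) hδ ht.1
  refine (hnear.union hfar).mono_set fun t ht => ?_
  rcases lt_or_ge t δ with htδ | htδ
  · exact Or.inl ⟨ht.1, htδ⟩
  · exact Or.inr ⟨htδ, ht.2⟩

end Monotone

theorem MeasureTheory.IntegrableOn.tendsto_setIntegral_Ioc_nhdsGT {g : ℝ → ℝ} {b a : ℝ}
    (hba : b < a) (hg : IntegrableOn g (Ioc b a)) :
    Tendsto (fun ε => ∫ t in Ioc ε a, g t) (𝓝[>] b) (𝓝 (∫ t in Ioc b a, g t)) := by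
  have hcont : ContinuousWithinAt (fun ε => ∫ t in ε..a, g t) (Icc b a) b := by
    have hg' : IntegrableOn g (uIcc b a) := by
      rwa [uIcc_of_le hba.le, integrableOn_Icc_iff_integrableOn_Ioc enorm_ne_top]
    have := intervalIntegral.continuousOn_primitive_interval_left hg'
    rw [uIcc_of_le hba.le] at this
    exact this b (left_mem_Icc.mpr hba.le)
  have hlim := (hcont.mono_of_mem_nhdsWithin (Icc_mem_nhdsGT hba)).tendsto
  rw [intervalIntegral.integral_of_le hba.le] at hlim
  refine hlim.congr' ?_
  filter_upwards [Ioc_mem_nhdsGT hba] with ε hε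
  exact intervalIntegral.integral_of_le hε.2

theorem stmt11_general (a : ℝ) (ha : 0 < a) (F : ℝ → ℝ)
    (hmono : Monotone F)
    (hα : (∃ t > (0 : ℝ), F t = F 0) ∨
      (0 : EReal) < Filter.liminf
        (fun t : ℝ => ((Real.log (F t - F 0) / Real.log t : ℝ) : EReal))
        (nhdsWithin 0 (Set.Ioi 0))) :
    ∃ L : ℝ, Filter.Tendsto (fun ε : ℝ => ∫ t in Set.Ioc ε a, (F t - F 0) / t)
      (nhdsWithin 0 (Set.Ioi 0)) (nhds L) := by
  obtain ⟨c, hc, hle⟩ := hmono.exists_eventually_sub_le_rpow hα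
  exact ⟨_, (hmono.integrableOn_sub_div_Ioc hc hle a).tendsto_setIntegral_Ioc_nhdsGT ha⟩

/-- Let `F = F_A` be the spectral density function of a positive operator `A`
(with `a = ‖A‖`): a nondecreasing, right-continuous function with values in `[0,1]`.  If the
Novikov–Shubin invariant `α(A)` is nonzero — i.e. either `F` is constant near `0⁺` (the `∞⁺`
case) or `liminf_{t→0⁺} ln(F(t) − F(0))/ln t > 0` — then
`lim_{ε→0⁺} ∫_ε^a (F(t) − F(0))/t dt` exists and is finite. -/
theorem stmt11 (a : ℝ) (ha : 0 < a) (F : ℝ → ℝ)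
    (hmono : Monotone F)
    (hrc : ∀ t : ℝ, ContinuousWithinAt F (Set.Ici t) t)
    (h0F : ∀ t, 0 ≤ F t) (hF1 : ∀ t, F t ≤ 1)
    (hα : (∃ t > (0 : ℝ), F t = F 0) ∨
      (0 : EReal) < Filter.liminf
        (fun t : ℝ => ((Real.log (F t - F 0) / Real.log t : ℝ) : EReal))
        (nhdsWithin 0 (Set.Ioi 0))) :
    ∃ L : ℝ, Filter.Tendsto (fun ε : ℝ => ∫ t in Set.Ioc ε a, (F t - F 0) / t)
      (nhdsWithin 0 (Set.Ioi 0)) (nhds L) :=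
  stmt11_general a ha F hmono hα
end

section
/- Let μ be a probability measure on [0, a] with cumulative distribution function F(t) = μ([0, t]). Then ∫_{(0,a]} |ln t| dμ(t) < ∞ if and only if ∫_0^a (F(t) − F(0))/t dt < ∞. -/
/-!
Since `F t - F 0 = μ((0,t])`, the improper integral has a nonnegative integrand, so it converges
exactly when `t ↦ μ((0,t]) / t` is integrable on `(0,a]`. By Tonelli,
`∫_0^a μ((0,t]) / t dt = ∫_{(0,a]} (∫_s^a dt / t) dμ(s) = ∫_{(0,a]} log (a / s) dμ(s)`,
and as `μ` is finite, `log (a / s) = log a - log s` is `μ`-integrable on `(0,a]` exactly when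
`|log s|` is.
-/

open MeasureTheory Filter Set Topology
open scoped ENNReal

theorem integrableOn_Ioc_iff_exists_tendsto_setIntegral {f : ℝ → ℝ} {a b : ℝ}
    (hf : AEStronglyMeasurable f (volume.restrict (Ioc a b)))
    (hf_nonneg : ∀ t ∈ Ioc a b, 0 ≤ f t)
    (hf_int : ∀ x, a < x → IntegrableOn f (Ioc x b)) :
    IntegrableOn f (Ioc a b) ↔
      ∃ L, Tendsto (fun x => ∫ t in Ioc x b, f t) (𝓝[>] a) (𝓝 L) := by
  have hcover : AECover (volume.restrict (Ioc a b)) (𝓝[>] a) (fun x => Ioc x b) :=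
    aecover_Ioc_of_Ioc (tendsto_id.mono_left nhdsWithin_le_nhds) tendsto_const_nhds
  have hrestrict : ∀ᶠ x in 𝓝[>] a,
      (volume.restrict (Ioc a b)).restrict (Ioc x b) = volume.restrict (Ioc x b) := by
    filter_upwards [self_mem_nhdsWithin] with x hx
    rw [Measure.restrict_restrict measurableSet_Ioc,
      inter_eq_left.2 (Ioc_subset_Ioc_left (le_of_lt hx))]
  constructor
  · intro hint
    refine ⟨_, (hcover.integral_tendsto_of_countably_generated hint).congr' ?_⟩
    filter_upwards [hrestrict] with x hx
    rw [hx]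
  · rintro ⟨L, hL⟩
    refine hcover.integrable_of_lintegral_enorm_tendsto L hf ((ENNReal.tendsto_ofReal hL).congr' ?_)
    filter_upwards [hrestrict, self_mem_nhdsWithin] with x hx hax
    have hnonneg : ∀ t ∈ Ioc x b, 0 ≤ f t :=
      fun t ht => hf_nonneg t (Ioc_subset_Ioc_left (le_of_lt hax) ht)
    rw [hx, ofReal_integral_eq_lintegral_ofReal (hf_int x hax)
      ((ae_restrict_mem measurableSet_Ioc).mono hnonneg)]
    exact setLIntegral_congr_fun measurableSet_Ioc fun t ht =>
      (Real.enorm_of_nonneg (hnonneg t ht)).symm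

theorem setLIntegral_measure_Ioc_mul {μ ν : Measure ℝ} [SFinite μ] [SFinite ν]
    {g : ℝ → ℝ≥0∞} (hg : Measurable g) (c a : ℝ) :
    ∫⁻ t in Ioc c a, μ (Ioc c t) * g t ∂ν = ∫⁻ s in Ioc c a, ∫⁻ t in Icc s a, g t ∂ν ∂μ := by
  -- both sides integrate `g t` over `{(t, s) | c < s ≤ t ≤ a}`
  have hswap :=
    lintegral_lintegral_swap (μ := ν.restrict (Ioc c a)) (ν := μ.restrict (Ioc c a))
      (f := fun t s => (Ici s).indicator g t) <| by
      have : (Function.uncurry fun t s => (Ici s).indicator g t) =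
          {p : ℝ × ℝ | p.2 ≤ p.1}.indicator (fun p => g p.1) := rfl
      rw [this]
      exact ((hg.comp measurable_fst).indicator
        (measurableSet_le measurable_snd measurable_fst)).aemeasurable
  convert hswap using 1
  · refine setLIntegral_congr_fun measurableSet_Ioc fun t ht => ?_
    have hind : (fun s => (Ici s).indicator g t) = (Iic t).indicator fun _ => g t := by
      ext s
      simp only [indicator, mem_Ici, mem_Iic]
    rw [hind, lintegral_indicator_const measurableSet_Iic, Measure.restrict_apply measurableSet_Iic,
      Iic_inter_Ioc_of_le ht.2, mul_comm]
  · refine setLIntegral_congr_fun measurableSet_Ioc fun s hs => ?_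
    have hset : Ici s ∩ Ioc c a = Icc s a := by
      ext t
      simp only [mem_inter_iff, mem_Ici, mem_Ioc, mem_Icc]
      exact ⟨fun h => ⟨h.1, h.2.2⟩, fun h => ⟨h.1, hs.1.trans_le h.1, h.2⟩⟩
    rw [lintegral_indicator measurableSet_Ici, Measure.restrict_restrict measurableSet_Ici, hset]

theorem setLIntegral_Icc_ofReal_inv {s a : ℝ} (hs : 0 < s) (hsa : s ≤ a) :
    ∫⁻ t in Icc s a, ENNReal.ofReal t⁻¹ = ENNReal.ofReal (Real.log (a / s)) := by
  have hpos : ∀ t ∈ Icc s a, 0 < t := fun t ht => hs.trans_le ht.1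
  have hint : IntegrableOn (fun t : ℝ => t⁻¹) (Icc s a) :=
    (continuousOn_inv₀.mono fun t ht => (hpos t ht).ne').integrableOn_Icc
  rw [← ofReal_integral_eq_lintegral_ofReal hint
      ((ae_restrict_mem measurableSet_Icc).mono fun t ht => (inv_pos.2 (hpos t ht)).le),
    integral_Icc_eq_integral_Ioc, ← intervalIntegral.integral_of_le hsa,
    integral_inv_of_pos hs (hs.trans_le hsa)]

theorem setLIntegral_measure_Ioc_mul_ofReal_inv (μ : Measure ℝ) [SFinite μ] (a : ℝ) :
    ∫⁻ t in Ioc 0 a, μ (Ioc 0 t) * ENNReal.ofReal t⁻¹ =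
      ∫⁻ s in Ioc 0 a, ENNReal.ofReal (Real.log (a / s)) ∂μ := by
  rw [setLIntegral_measure_Ioc_mul measurable_inv.ennreal_ofReal]
  exact setLIntegral_congr_fun measurableSet_Ioc fun s hs => setLIntegral_Icc_ofReal_inv hs.1 hs.2

theorem integrableOn_abs_log_iff (μ : Measure ℝ) [IsFiniteMeasure μ] (a : ℝ) :
    IntegrableOn (fun t => |Real.log t|) (Ioc 0 a) μ ↔
      ∫⁻ s in Ioc 0 a, ENNReal.ofReal (Real.log (a / s)) ∂μ ≠ ∞ := by
  have hlog_div : ∀ s ∈ Ioc 0 a, Real.log (a / s) = -Real.log s + Real.log a := fun s hs => by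
    rw [Real.log_div (hs.1.trans_le hs.2).ne' hs.1.ne']; ring
  calc IntegrableOn (fun t => |Real.log t|) (Ioc 0 a) μ
      ↔ IntegrableOn Real.log (Ioc 0 a) μ :=
        integrable_norm_iff Real.measurable_log.aestronglyMeasurable
    _ ↔ IntegrableOn (fun s => -Real.log s + Real.log a) (Ioc 0 a) μ :=
        integrable_neg_iff.symm.trans integrable_add_const_iff.symm
    _ ↔ IntegrableOn (fun s => Real.log (a / s)) (Ioc 0 a) μ :=
        integrable_congr ((ae_restrict_mem measurableSet_Ioc).mono fun s hs => (hlog_div s hs).symm)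
    _ ↔ _ := (lintegral_ofReal_ne_top_iff_integrable
        (measurable_const.div measurable_id).log.aestronglyMeasurable
        ((ae_restrict_mem measurableSet_Ioc).mono fun s hs =>
          Real.log_nonneg ((one_le_div hs.1).2 hs.2))).symm

theorem monotone_toReal_measure_Ioc (μ : Measure ℝ) [IsFiniteMeasure μ] (c : ℝ) :
    Monotone fun t => (μ (Ioc c t)).toReal := fun _ _ hxy =>
  ENNReal.toReal_mono (measure_ne_top μ _) (measure_mono (Ioc_subset_Ioc_right hxy))

theorem integrableOn_measure_Ioc_div_iff (μ : Measure ℝ) [IsFiniteMeasure μ] (a : ℝ) :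
    IntegrableOn (fun t => (μ (Ioc 0 t)).toReal / t) (Ioc 0 a) ↔
      IntegrableOn (fun t => |Real.log t|) (Ioc 0 a) μ := by
  rw [integrableOn_abs_log_iff, ← setLIntegral_measure_Ioc_mul_ofReal_inv, IntegrableOn,
    ← lintegral_ofReal_ne_top_iff_integrable (f := fun t => (μ (Ioc 0 t)).toReal / t)
      ((monotone_toReal_measure_Ioc μ 0).measurable.div measurable_id).aestronglyMeasurable
      ((ae_restrict_mem measurableSet_Ioc).mono fun t ht =>
        div_nonneg ENNReal.toReal_nonneg ht.1.le)]
  refine Iff.of_eq (congrArg (· ≠ ∞) (setLIntegral_congr_fun measurableSet_Ioc fun t ht => ?_))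
  rw [div_eq_mul_inv, ENNReal.ofReal_mul ENNReal.toReal_nonneg,
    ENNReal.ofReal_toReal (measure_ne_top μ _)]

theorem integrableOn_measure_Ioc_div (μ : Measure ℝ) [IsFiniteMeasure μ] {ε : ℝ}
    (hε : 0 < ε) (a : ℝ) : IntegrableOn (fun t => (μ (Ioc 0 t)).toReal / t) (Ioc ε a) := by
  refine IntegrableOn.of_bound measure_Ioc_lt_top
    ((monotone_toReal_measure_Ioc μ 0).measurable.div measurable_id).aestronglyMeasurable
    ((μ univ).toReal / ε) ((ae_restrict_mem measurableSet_Ioc).mono fun t ht => ?_)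
  rw [Real.norm_of_nonneg (div_nonneg ENNReal.toReal_nonneg (hε.trans ht.1).le)]
  gcongr
  · exact measure_ne_top μ _
  · exact subset_univ _
  · exact ht.1.le

theorem toReal_measure_Icc_sub_toReal_measure_Icc_self (μ : Measure ℝ) [IsFiniteMeasure μ]
    {c t : ℝ} (hct : c ≤ t) :
    (μ (Icc c t)).toReal - (μ (Icc c c)).toReal = (μ (Ioc c t)).toReal := by
  have hdisj : Disjoint (Icc c c) (Ioc c t) := by
    rw [Icc_self, disjoint_singleton_left]
    exact fun h => h.1.false
  rw [← Icc_union_Ioc_eq_Icc le_rfl hct, measure_union hdisj measurableSet_Ioc,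
    ENNReal.toReal_add (measure_ne_top μ _) (measure_ne_top μ _)]
  ring

theorem stmt14_general (a : ℝ) (μ : Measure ℝ) [IsProbabilityMeasure μ]
    (F : ℝ → ℝ) (hF : ∀ t, F t = (μ (Set.Icc 0 t)).toReal) :
    MeasureTheory.IntegrableOn (fun t => |Real.log t|) (Set.Ioc 0 a) μ ↔
    (∃ L : ℝ, Filter.Tendsto (fun ε : ℝ => ∫ t in Set.Ioc ε a, (F t - F 0) / t)
      (nhdsWithin 0 (Set.Ioi 0)) (nhds L)) := by
  have hF_sub : ∀ ε ∈ Ioi (0 : ℝ),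
      ∫ t in Ioc ε a, (F t - F 0) / t = ∫ t in Ioc ε a, (μ (Ioc 0 t)).toReal / t :=
    fun ε hε => setIntegral_congr_fun measurableSet_Ioc fun t ht => by
      rw [hF, hF, toReal_measure_Icc_sub_toReal_measure_Icc_self μ (hε.out.trans ht.1).le]
  rw [← integrableOn_measure_Ioc_div_iff,
    integrableOn_Ioc_iff_exists_tendsto_setIntegral (f := fun t => (μ (Ioc 0 t)).toReal / t)
    ((monotone_toReal_measure_Ioc μ 0).measurable.div measurable_id).aestronglyMeasurable
    (fun t ht => div_nonneg ENNReal.toReal_nonneg ht.1.le)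
    (fun ε hε => integrableOn_measure_Ioc_div μ hε a)]
  exact exists_congr fun L =>
    tendsto_congr' ((eventually_nhdsWithin_of_forall hF_sub).mono fun _ h => h.symm)

/-- For a probability measure `μ` on `[0,a]` with cumulative distribution function
`F(t) = μ([0,t])`, `∫_{(0,a]} |ln t| dμ(t) < ∞` if and only if the improper integral
`∫_0^a (F(t) − F(0))/t dt` is finite. -/
theorem stmt14 (a : ℝ) (ha : 0 < a) (μ : Measure ℝ) [IsProbabilityMeasure μ]
    (hsupp : μ (Set.Icc 0 a)ᶜ = 0)
    (F : ℝ → ℝ) (hF : ∀ t, F t = (μ (Set.Icc 0 t)).toReal) :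
    MeasureTheory.IntegrableOn (fun t => |Real.log t|) (Set.Ioc 0 a) μ ↔
    (∃ L : ℝ, Filter.Tendsto (fun ε : ℝ => ∫ t in Set.Ioc ε a, (F t - F 0) / t)
      (nhdsWithin 0 (Set.Ioi 0)) (nhds L)) :=
  stmt14_general a μ F hF
end
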